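/- arXiv:2604.26728 — 3 statements merged into one kernel-verified Lean document; each statement's English description precedes it below -/
import Mathlib

section
/- For all x, y in the open unit ball of ℝⁿ and all t with 0 ≤ t ≤ 1, one has [tx,y] ≥ [x,y]/2, where [x,y] := sqrt(1 - 2⟨x,y⟩ + |x|²|y|²). -/
/-!
For `y ≠ 0` the bracket is a distance: `[x,y] = ‖ ‖y‖ x - y/‖y‖ ‖`, the distance from `‖y‖ x` to a
unit vector. The triangle inequality then gives `[x,y] ≥ 1 - ‖x‖‖y‖` and
`[x,y] ≤ [x',y] + ‖x - x'‖‖y‖`. With `x' = t x` these read `[tx,y] ≥ 1 - t‖x‖‖y‖` and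
`[x,y] ≤ [tx,y] + (1-t)‖x‖‖y‖`, and since `‖x‖‖y‖ ≤ 1` the error term `(1-t)‖x‖‖y‖` is at most
`1 - t‖x‖‖y‖ ≤ [tx,y]`.
-/

open RealInnerProductSpace

/-- The bracket `[x,y] = sqrt(1 - 2⟨x,y⟩ + |x|²|y|²)`. -/
noncomputable def br {n : ℕ} (x y : EuclideanSpace ℝ (Fin n)) : ℝ :=
  Real.sqrt (1 - 2 * ⟪x, y⟫ + ‖x‖ ^ 2 * ‖y‖ ^ 2)

theorem norm_norm_smul_sub_inv_norm_smul_sq {E : Type*} [NormedAddCommGroup E]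
    [InnerProductSpace ℝ E] (x : E) {y : E} (hy : y ≠ 0) :
    ‖‖y‖ • x - ‖y‖⁻¹ • y‖ ^ 2 = 1 - 2 * ⟪x, y⟫ + ‖x‖ ^ 2 * ‖y‖ ^ 2 := by
  have hy' : ‖y‖ ≠ 0 := norm_ne_zero_iff.mpr hy
  rw [norm_sub_sq_real, norm_smul, norm_smul, real_inner_smul_left, real_inner_smul_right,
    Real.norm_of_nonneg (norm_nonneg y), norm_inv, norm_norm]
  field_simp
  ring

namespace br

variable {n : ℕ}

theorem eq_norm (x : EuclideanSpace ℝ (Fin n)) {y : EuclideanSpace ℝ (Fin n)} (hy : y ≠ 0) :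
    br x y = ‖‖y‖ • x - ‖y‖⁻¹ • y‖ := by
  rw [br, ← norm_norm_smul_sub_inv_norm_smul_sq x hy, Real.sqrt_sq (norm_nonneg _)]

theorem zero_right (x : EuclideanSpace ℝ (Fin n)) : br x 0 = 1 := by
  simp [br]

theorem one_sub_norm_mul_norm_le (x y : EuclideanSpace ℝ (Fin n)) : 1 - ‖x‖ * ‖y‖ ≤ br x y := by
  rcases eq_or_ne y 0 with rfl | hy
  · simp [zero_right]
  have hy' : ‖y‖ ≠ 0 := norm_ne_zero_iff.mpr hy
  calc 1 - ‖x‖ * ‖y‖ = ‖‖y‖⁻¹ • y‖ - ‖‖y‖ • x‖ := by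
        rw [norm_smul, norm_smul, norm_inv, norm_norm, inv_mul_cancel₀ hy', mul_comm]
    _ ≤ br x y := by
        rw [eq_norm x hy, norm_sub_rev]
        exact norm_sub_norm_le _ _

theorem le_add_norm_sub_mul_norm (x x' y : EuclideanSpace ℝ (Fin n)) :
    br x y ≤ br x' y + ‖x - x'‖ * ‖y‖ := by
  rcases eq_or_ne y 0 with rfl | hy
  · simp [zero_right]
  have h := norm_sub_norm_le (‖y‖ • x - ‖y‖⁻¹ • y) (‖y‖ • x' - ‖y‖⁻¹ • y)
  rw [sub_sub_sub_cancel_right, ← smul_sub, norm_smul, norm_norm, ← eq_norm x hy,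
    ← eq_norm x' hy] at h
  linarith

end br

theorem stmt_0_general {n : ℕ} (x y : EuclideanSpace ℝ (Fin n))
    (hx : ‖x‖ < 1) (hy : ‖y‖ < 1) (t : ℝ) (ht0 : 0 ≤ t) (ht1 : t ≤ 1) :
    br x y / 2 ≤ br (t • x) y := by
  have hxy : ‖x‖ * ‖y‖ ≤ 1 := mul_le_one₀ hx.le (norm_nonneg y) hy.le
  have hlower := br.one_sub_norm_mul_norm_le (t • x) y
  have hlip := br.le_add_norm_sub_mul_norm x (t • x) y
  rw [norm_smul, Real.norm_of_nonneg ht0] at hlower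
  rw [show x - t • x = (1 - t) • x by rw [sub_smul, one_smul], norm_smul,
    Real.norm_of_nonneg (sub_nonneg.mpr ht1)] at hlip
  linarith

theorem stmt_0 {n : ℕ} (hn : 2 ≤ n) (x y : EuclideanSpace ℝ (Fin n))
    (hx : ‖x‖ < 1) (hy : ‖y‖ < 1) (t : ℝ) (ht0 : 0 ≤ t) (ht1 : t ≤ 1) :
    br x y / 2 ≤ br (t • x) y :=
  stmt_0_general x y hx hy t ht0 ht1
end

section
/- Hardy's inequality: let 1 ≤ p < ∞, α > -1 and a < 1. For every nonnegative measurable function g on (a,1), ∫_a^1 (∫_a^x g(t) dt)^p (1-x)^α dx ≤ (p/(α+1))^p ∫_a^1 g(x)^p (1-x)^{α+p} dx. -/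
/-!
Split the integrand as `g(t) = (g(t)^p (1-t)^{(r+1)(p-1)})^{1/p} · ((1-t)^{-(r+1)})^{1-1/p}`
for a free parameter `r > 0` and apply Hölder on `(a,x)`; since
`∫_{-∞}^x (1-t)^{-(r+1)} dt = (1-x)^{-r}/r`, this gives
`(∫_a^x g)^p ≤ r^{1-p} (1-x)^{-r(p-1)} ∫_a^x g^p (1-t)^{(r+1)(p-1)}`. Multiplying by `(1-x)^α`,
integrating over `(a,1)` and swapping the integrals, the inner integral
`∫_t^1 (1-x)^{α-r(p-1)} dx` contributes `(1-t)^{α+1-r(p-1)} / (α+1-r(p-1))`, and the exponents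
of `1-t` add up to `α+p` whatever `r` is. The constant `r^{1-p} / (α+1-r(p-1))` is minimal at
`r = (α+1)/p`, where it equals `(p/(α+1))^p`.
-/

open MeasureTheory Set
open scoped ENNReal

lemma ENNReal.eq_rpow_mul_ofReal_rpow_mul {p : ℝ} (hp : 0 < p) (y : ℝ≥0∞) {u : ℝ} (hu : 0 < u)
    (β : ℝ) :
    y = (y ^ p * ENNReal.ofReal (u ^ (β * (p - 1)))) ^ p⁻¹
      * ENNReal.ofReal (u ^ (-β)) ^ (1 - p⁻¹) := by
  rw [ENNReal.mul_rpow_of_nonneg _ _ (inv_nonneg.2 hp.le), ← ENNReal.rpow_mul,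
    mul_inv_cancel₀ hp.ne', ENNReal.rpow_one, mul_assoc,
    ENNReal.ofReal_rpow_of_pos (by positivity), ENNReal.ofReal_rpow_of_pos (by positivity),
    ← Real.rpow_mul hu.le, ← Real.rpow_mul hu.le, ← ENNReal.ofReal_mul (by positivity),
    ← Real.rpow_add hu, show β * (p - 1) * p⁻¹ + -β * (1 - p⁻¹) = 0 by field_simp; ring,
    Real.rpow_zero, ENNReal.ofReal_one, mul_one]

lemma ENNReal.ofReal_rpow_div_rpow_mul_ofReal_rpow {p r u α : ℝ} (hr : 0 < r) (hu : 0 < u) :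
    ENNReal.ofReal (u ^ (-r) / r) ^ (p - 1) * ENNReal.ofReal (u ^ α)
      = ENNReal.ofReal (r ^ (1 - p)) * ENNReal.ofReal (u ^ (α - r * (p - 1))) := by
  rw [ENNReal.ofReal_rpow_of_pos (by positivity), ← ENNReal.ofReal_mul (by positivity),
    ← ENNReal.ofReal_mul (by positivity), Real.div_rpow (by positivity) hr.le,
    ← Real.rpow_mul hu.le, show 1 - p = -(p - 1) by ring, Real.rpow_neg hr.le,
    show α - r * (p - 1) = -r * (p - 1) + α by ring, Real.rpow_add hu]
  ring_nf

lemma lintegral_Ioo_one_sub_rpow {c t : ℝ} (hc : -1 < c) (ht : t < 1) :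
    ∫⁻ x in Ioo t 1, ENNReal.ofReal ((1 - x) ^ c)
      = ENNReal.ofReal ((1 - t) ^ (c + 1) / (c + 1)) := by
  have hpre : (fun x : ℝ => 1 - x) ⁻¹' Ioo 0 (1 - t) = Ioo t 1 := by
    rw [preimage_const_sub_Ioo, sub_sub_cancel, sub_zero]
  have h1t : 0 < 1 - t := by linarith
  rw [← hpre, (volume.measurePreserving_sub_left 1).setLIntegral_comp_preimage measurableSet_Ioo
    (f := fun u => ENNReal.ofReal (u ^ c)) (by fun_prop),
    ← ofReal_integral_eq_lintegral_ofReal ((intervalIntegral.integrableOn_Ioo_rpow_iff h1t).mpr hc)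
      (ae_restrict_of_forall_mem measurableSet_Ioo fun u hu => Real.rpow_nonneg hu.1.le c),
    ← integral_Ioc_eq_integral_Ioo, ← intervalIntegral.integral_of_le h1t.le,
    integral_rpow (Or.inl hc), Real.zero_rpow (by linarith), sub_zero]

lemma lintegral_Iio_one_sub_rpow_neg {r x : ℝ} (hr : 0 < r) (hx : x < 1) :
    ∫⁻ t in Iio x, ENNReal.ofReal ((1 - t) ^ (-(r + 1)))
      = ENNReal.ofReal ((1 - x) ^ (-r) / r) := by
  have hpre : (fun t : ℝ => 1 - t) ⁻¹' Ioi (1 - x) = Iio x := by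
    rw [preimage_const_sub_Ioi, sub_sub_cancel]
  have h1x : 0 < 1 - x := by linarith
  have hexp : -(r + 1) < -1 := by linarith
  rw [← hpre, (volume.measurePreserving_sub_left 1).setLIntegral_comp_preimage measurableSet_Ioi
    (f := fun u => ENNReal.ofReal (u ^ (-(r + 1)))) (by fun_prop),
    ← ofReal_integral_eq_lintegral_ofReal (integrableOn_Ioi_rpow_of_lt hexp h1x)
      (ae_restrict_of_forall_mem measurableSet_Ioi fun u hu =>
        Real.rpow_nonneg (h1x.trans hu).le _),
    integral_Ioi_rpow_of_lt hexp h1x, show -(r + 1) + 1 = -r by ring, neg_div_neg_eq]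

lemma rpow_lintegral_Ioo_le_weighted {p r a x : ℝ} (hp : 1 ≤ p) (hr : 0 < r) (hx : x < 1)
    {f : ℝ → ℝ≥0∞} (hf : Measurable f) :
    (∫⁻ t in Ioo a x, f t) ^ p
      ≤ (∫⁻ t in Ioo a x, f t ^ p * ENNReal.ofReal ((1 - t) ^ ((r + 1) * (p - 1))))
        * ENNReal.ofReal ((1 - x) ^ (-r) / r) ^ (p - 1) := by
  have hp0 : 0 < p := by linarith
  have hq : 0 ≤ 1 - p⁻¹ := sub_nonneg.2 (inv_le_one_of_one_le₀ hp)
  have hsplit : ∫⁻ t in Ioo a x, f t = ∫⁻ t in Ioo a x,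
      (f t ^ p * ENNReal.ofReal ((1 - t) ^ ((r + 1) * (p - 1)))) ^ p⁻¹
        * ENNReal.ofReal ((1 - t) ^ (-(r + 1))) ^ (1 - p⁻¹) :=
    setLIntegral_congr_fun measurableSet_Ioo fun t ht =>
      ENNReal.eq_rpow_mul_ofReal_rpow_mul hp0 (f t) (by linarith [ht.2]) (r + 1)
  have hweight : ∫⁻ t in Ioo a x, ENNReal.ofReal ((1 - t) ^ (-(r + 1)))
      ≤ ENNReal.ofReal ((1 - x) ^ (-r) / r) :=
    (lintegral_mono_set Ioo_subset_Iio_self).trans_eq (lintegral_Iio_one_sub_rpow_neg hr hx)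
  have holder := ENNReal.lintegral_mul_norm_pow_le (μ := volume.restrict (Ioo a x))
    (f := fun t => f t ^ p * ENNReal.ofReal ((1 - t) ^ ((r + 1) * (p - 1))))
    (g := fun t => ENNReal.ofReal ((1 - t) ^ (-(r + 1)))) (by fun_prop) (by fun_prop)
    (inv_nonneg.2 hp0.le) hq (add_sub_cancel _ _)
  rw [← hsplit] at holder
  calc (∫⁻ t in Ioo a x, f t) ^ p
      ≤ ((∫⁻ t in Ioo a x, f t ^ p * ENNReal.ofReal ((1 - t) ^ ((r + 1) * (p - 1)))) ^ p⁻¹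
          * ENNReal.ofReal ((1 - x) ^ (-r) / r) ^ (1 - p⁻¹)) ^ p := by
        gcongr
        exact holder.trans (by gcongr)
    _ = _ := by
        rw [ENNReal.mul_rpow_of_nonneg _ _ hp0.le, ← ENNReal.rpow_mul, ← ENNReal.rpow_mul,
          inv_mul_cancel₀ hp0.ne', ENNReal.rpow_one, sub_mul, inv_mul_cancel₀ hp0.ne', one_mul]

lemma lintegral_lintegral_Ioo_mul_swap {μ : Measure ℝ} [SFinite μ] (a b : ℝ)
    {F W : ℝ → ℝ≥0∞} (hF : Measurable F) (hW : Measurable W) :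
    ∫⁻ x in Ioo a b, (∫⁻ t in Ioo a x, F t ∂μ) * W x ∂μ
      = ∫⁻ t in Ioo a b, F t * ∫⁻ x in Ioo t b, W x ∂μ ∂μ := by
  let H : ℝ × ℝ → ℝ≥0∞ := {q | q.2 < q.1}.indicator fun q => F q.2 * W q.1
  have hH : Measurable H := ((hF.comp measurable_snd).mul (hW.comp measurable_fst)).indicator
      (measurableSet_lt measurable_snd measurable_fst)
  calc ∫⁻ x in Ioo a b, (∫⁻ t in Ioo a x, F t ∂μ) * W x ∂μ
      = ∫⁻ x in Ioo a b, ∫⁻ t in Ioo a b, H (x, t) ∂μ ∂μ := by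
        refine setLIntegral_congr_fun measurableSet_Ioo fun x hx => ?_
        have hslice : (fun t => H (x, t)) = (Iio x).indicator fun t => F t * W x := by
          ext t; by_cases h : t < x <;> simp [H, h]
        rw [hslice, lintegral_indicator measurableSet_Iio,
          Measure.restrict_restrict measurableSet_Iio,
          Iio_inter_Ioo, min_eq_left hx.2.le, lintegral_mul_const _ hF]
    _ = ∫⁻ t in Ioo a b, ∫⁻ x in Ioo a b, H (x, t) ∂μ ∂μ := lintegral_lintegral_swap hH.aemeasurable
    _ = ∫⁻ t in Ioo a b, F t * ∫⁻ x in Ioo t b, W x ∂μ ∂μ := by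
        refine setLIntegral_congr_fun measurableSet_Ioo fun t ht => ?_
        have hslice : (fun x => H (x, t)) = (Ioi t).indicator fun x => F t * W x := by
          ext x; by_cases h : t < x <;> simp [H, h]
        rw [hslice, lintegral_indicator measurableSet_Ioi,
          Measure.restrict_restrict measurableSet_Ioi,
          Ioi_inter_Ioo, max_eq_left ht.1.le, lintegral_const_mul _ hW]

theorem hardy_one_sub_weight_le {p α r a : ℝ} (hp : 1 ≤ p) (hr : 0 < r)
    (hrα : r * (p - 1) < α + 1) {f : ℝ → ℝ≥0∞} (hf : Measurable f) :
    ∫⁻ x in Ioo a 1, (∫⁻ t in Ioo a x, f t) ^ p * ENNReal.ofReal ((1 - x) ^ α)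
      ≤ ENNReal.ofReal (r ^ (1 - p) / (α + 1 - r * (p - 1)))
        * ∫⁻ x in Ioo a 1, f x ^ p * ENNReal.ofReal ((1 - x) ^ (α + p)) := by
  set G : ℝ → ℝ≥0∞ := fun t => f t ^ p * ENNReal.ofReal ((1 - t) ^ ((r + 1) * (p - 1)))
  have hG : Measurable G := by fun_prop
  have hγ : -1 < α - r * (p - 1) := by linarith
  calc ∫⁻ x in Ioo a 1, (∫⁻ t in Ioo a x, f t) ^ p * ENNReal.ofReal ((1 - x) ^ α)
      ≤ ∫⁻ x in Ioo a 1, ENNReal.ofReal (r ^ (1 - p))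
          * ((∫⁻ t in Ioo a x, G t) * ENNReal.ofReal ((1 - x) ^ (α - r * (p - 1)))) := by
        refine setLIntegral_mono' measurableSet_Ioo fun x hx => ?_
        grw [rpow_lintegral_Ioo_le_weighted hp hr hx.2 hf, mul_assoc,
          ENNReal.ofReal_rpow_div_rpow_mul_ofReal_rpow hr (by linarith [hx.2])]
        exact (mul_left_comm _ _ _).le
    _ = ENNReal.ofReal (r ^ (1 - p)) * ∫⁻ t in Ioo a 1, G t
          * ∫⁻ x in Ioo t 1, ENNReal.ofReal ((1 - x) ^ (α - r * (p - 1))) := by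
        rw [lintegral_const_mul' _ _ ENNReal.ofReal_ne_top,
          lintegral_lintegral_Ioo_mul_swap a 1 hG (by fun_prop)]
    _ = ENNReal.ofReal (r ^ (1 - p)) * ∫⁻ t in Ioo a 1, ENNReal.ofReal (α + 1 - r * (p - 1))⁻¹
          * (f t ^ p * ENNReal.ofReal ((1 - t) ^ (α + p))) := by
        congr 1
        refine setLIntegral_congr_fun measurableSet_Ioo fun t ht => ?_
        have h1t : 0 < 1 - t := by linarith [ht.2]
        have hexp : (1 - t) ^ (α + p)
            = (1 - t) ^ ((r + 1) * (p - 1)) * (1 - t) ^ (α + 1 - r * (p - 1)) := by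
          rw [← Real.rpow_add h1t]; ring_nf
        rw [lintegral_Ioo_one_sub_rpow hγ ht.2,
          show α - r * (p - 1) + 1 = α + 1 - r * (p - 1) by ring, hexp, div_eq_mul_inv,
          ENNReal.ofReal_mul (by positivity), ENNReal.ofReal_mul (by positivity)]
        ring
    _ = _ := by
        rw [lintegral_const_mul' _ _ ENNReal.ofReal_ne_top, ← mul_assoc,
          ← ENNReal.ofReal_mul (by positivity), div_eq_mul_inv]

theorem stmt_3_general (p α a : ℝ) (hp : 1 ≤ p) (hα : -1 < α)
    (g : ℝ → ℝ) (hg : Measurable g) :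
    ∫⁻ x in Set.Ioo a 1,
        (∫⁻ t in Set.Ioo a x, ENNReal.ofReal (g t)) ^ p
          * ENNReal.ofReal ((1 - x) ^ α)
      ≤ ENNReal.ofReal ((p / (α + 1)) ^ p)
        * ∫⁻ x in Set.Ioo a 1,
            ENNReal.ofReal (g x) ^ p * ENNReal.ofReal ((1 - x) ^ (α + p)) := by
  have hp0 : 0 < p := by linarith
  have hr : 0 < (α + 1) / p := div_pos (by linarith) hp0
  have hgap : α + 1 - (α + 1) / p * (p - 1) = (α + 1) / p := by field_simp; ring
  have hrα : (α + 1) / p * (p - 1) < α + 1 := by linarith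
  have hconst : ((α + 1) / p) ^ (1 - p) / (α + 1 - (α + 1) / p * (p - 1)) = (p / (α + 1)) ^ p := by
    rw [hgap, ← Real.rpow_sub_one hr.ne', sub_sub_cancel_left, Real.rpow_neg hr.le,
      ← Real.inv_rpow hr.le, inv_div]
  simpa only [hconst] using hardy_one_sub_weight_le hp hr hrα hg.ennreal_ofReal

/-- Hardy's inequality on `(a,1)` with weight `(1-x)^α`. -/
theorem stmt_3 (p α a : ℝ) (hp : 1 ≤ p) (hα : -1 < α) (ha : a < 1)
    (g : ℝ → ℝ) (hg : Measurable g) (hg0 : ∀ x ∈ Set.Ioo a 1, 0 ≤ g x) :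
    ∫⁻ x in Set.Ioo a 1,
        (∫⁻ t in Set.Ioo a x, ENNReal.ofReal (g t)) ^ p
          * ENNReal.ofReal ((1 - x) ^ α)
      ≤ ENNReal.ofReal ((p / (α + 1)) ^ p)
        * ∫⁻ x in Set.Ioo a 1,
            ENNReal.ofReal (g x) ^ p * ENNReal.ofReal ((1 - x) ^ (α + p)) :=
  stmt_3_general p α a hp hα g hg
end

section
/- Let b > -1 and c ∈ ℝ. There exists a constant C = C(n,b,c) such that for all x, y in the open unit ball of ℝⁿ, ∫₀¹ (1-t)^b / [tx,y]^{1+b+c} dt is bounded by C/[x,y]^c if c > 0, by C(1 + log(1/[x,y])) if c = 0, and by C if c < 0. -/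
/-!
Write `r = [x,y]`. For `y ≠ 0`, `[x,y] = ‖‖y‖x - y/‖y‖‖` is the distance from `‖y‖x` to a unit
vector, so for `0 ≤ t ≤ 1` the triangle inequality gives `[tx,y] ≥ 1 - t` and
`[x,y] ≤ [tx,y] + (1 - t) ≤ 2[tx,y]`. After substituting `u = 1 - t`, split the integral at
`ρ = r / 2`: on `[0, ρ]` the bracket is at least `ρ`, contributing `ρ^(-c) / (b+1)`, and on
`[ρ, 1]` it is at least `u`, contributing `∫_ρ^1 u^(-1-c) du`, which is `(ρ^(-c) - 1) / c` or
`log (1/ρ)` according as `c ≠ 0` or `c = 0`. When `1 + b + c ≤ 0` the bound `[tx,y] ≤ 2`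
suffices instead.
-/

open RealInnerProductSpace

section Bracket

@[fun_prop]
lemma Continuous.br {α : Type*} [TopologicalSpace α] {n : ℕ}
    {f g : α → EuclideanSpace ℝ (Fin n)} (hf : Continuous f) (hg : Continuous g) :
    Continuous fun a => br (f a) (g a) := by
  unfold _root_.br; fun_prop

variable {n : ℕ} (x y : EuclideanSpace ℝ (Fin n))

lemma br_zero_right : br x 0 = 1 := by
  simp [br]

lemma br_eq_norm_sub {y : EuclideanSpace ℝ (Fin n)} (hy : y ≠ 0) :
    br x y = ‖‖y‖ • x - ‖y‖⁻¹ • y‖ := by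
  have hy' : ‖y‖ ≠ 0 := norm_ne_zero_iff.2 hy
  rw [br, ← Real.sqrt_sq (norm_nonneg (‖y‖ • x - ‖y‖⁻¹ • y)), norm_sub_sq_real, norm_smul,
    norm_smul, real_inner_smul_left, real_inner_smul_right]
  congr 1
  simp only [Real.norm_eq_abs, abs_norm, abs_inv]
  field_simp
  ring

lemma one_sub_mul_norm_le_br : 1 - ‖x‖ * ‖y‖ ≤ br x y := by
  rcases eq_or_ne y 0 with rfl | hy
  · simp [br_zero_right]
  have hy' : ‖y‖ ≠ 0 := norm_ne_zero_iff.2 hy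
  calc 1 - ‖x‖ * ‖y‖ = ‖‖y‖⁻¹ • y‖ - ‖‖y‖ • x‖ := by
        simp [norm_smul, hy', mul_comm]
    _ ≤ ‖‖y‖⁻¹ • y - ‖y‖ • x‖ := norm_sub_norm_le _ _
    _ = br x y := by rw [br_eq_norm_sub x hy, norm_sub_rev]

lemma br_le_one_add_mul_norm : br x y ≤ 1 + ‖x‖ * ‖y‖ := by
  rcases eq_or_ne y 0 with rfl | hy
  · simp [br_zero_right]
  have hy' : ‖y‖ ≠ 0 := norm_ne_zero_iff.2 hy
  calc br x y ≤ ‖‖y‖ • x‖ + ‖‖y‖⁻¹ • y‖ := (br_eq_norm_sub x hy).trans_le (norm_sub_le _ _)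
    _ = 1 + ‖x‖ * ‖y‖ := by simp [norm_smul, hy', mul_comm, add_comm]

lemma br_le_br_smul_add (t : ℝ) : br x y ≤ br (t • x) y + |1 - t| * (‖x‖ * ‖y‖) := by
  rcases eq_or_ne y 0 with rfl | hy
  · simp [br_zero_right]
  rw [br_eq_norm_sub x hy, br_eq_norm_sub _ hy, smul_comm ‖y‖ t]
  have hdiff : ‖‖y‖ • x - t • ‖y‖ • x‖ = |1 - t| * (‖x‖ * ‖y‖) := by
    rw [show ‖y‖ • x - t • ‖y‖ • x = ((1 - t) * ‖y‖) • x by module, norm_smul, norm_mul,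
      Real.norm_eq_abs, norm_norm]
    ring
  linarith [norm_sub_le_norm_sub_add_norm_sub (‖y‖ • x) (t • ‖y‖ • x) (‖y‖⁻¹ • y)]

variable {x y}

lemma br_pos (hx : ‖x‖ < 1) (hy : ‖y‖ < 1) : 0 < br x y := by
  have : ‖x‖ * ‖y‖ < 1 := mul_lt_one_of_nonneg_of_lt_one_left (norm_nonneg x) hx hy.le
  linarith [one_sub_mul_norm_le_br x y]

lemma br_le_two (hxy : ‖x‖ * ‖y‖ ≤ 1) : br x y ≤ 2 := by
  linarith [br_le_one_add_mul_norm x y]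

lemma one_sub_le_br_smul (hxy : ‖x‖ * ‖y‖ ≤ 1) {t : ℝ} (ht : 0 ≤ t) : 1 - t ≤ br (t • x) y := by
  have h := one_sub_mul_norm_le_br (t • x) y
  rw [norm_smul, Real.norm_eq_abs, abs_of_nonneg ht, mul_assoc] at h
  nlinarith

lemma half_br_le_br_smul (hxy : ‖x‖ * ‖y‖ ≤ 1) {t : ℝ} (ht₀ : 0 ≤ t) (ht₁ : t ≤ 1) :
    br x y / 2 ≤ br (t • x) y := by
  have h := br_le_br_smul_add x y t
  rw [abs_of_nonneg (sub_nonneg.2 ht₁)] at h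
  nlinarith [one_sub_le_br_smul hxy ht₀]

lemma br_smul_le_two (hxy : ‖x‖ * ‖y‖ ≤ 1) {t : ℝ} (ht : |t| ≤ 1) : br (t • x) y ≤ 2 := by
  refine br_le_two ?_
  rw [norm_smul, Real.norm_eq_abs, mul_assoc]
  exact mul_le_one₀ ht (by positivity) hxy

end Bracket

section RpowDivRpow

open MeasureTheory Set intervalIntegral Real

variable {g : ℝ → ℝ} {b : ℝ}

lemma intervalIntegrable_rpow_div_rpow (hb : -1 < b) (hg : ContinuousOn g (Icc 0 1))
    (hg₀ : ∀ u ∈ Icc (0 : ℝ) 1, 0 < g u) (q : ℝ) {a₁ a₂ : ℝ} (h₁ : a₁ ∈ Icc (0 : ℝ) 1)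
    (h₂ : a₂ ∈ Icc (0 : ℝ) 1) :
    IntervalIntegrable (fun u => u ^ b / g u ^ q) volume a₁ a₂ := by
  have hsub := uIcc_subset_Icc h₁ h₂
  have hinv : ContinuousOn (fun u => (g u ^ q)⁻¹) (uIcc a₁ a₂) :=
    ((hg.mono hsub).rpow_const fun u hu => Or.inl (hg₀ u (hsub hu)).ne').inv₀
      fun u hu => (rpow_pos_of_pos (hg₀ u (hsub hu)) q).ne'
  simpa only [div_eq_mul_inv] using (intervalIntegrable_rpow' hb).mul_continuousOn hinv

lemma integral_rpow_div_rpow_le_of_nonneg (hb : -1 < b) {ρ : ℝ} (hρ : 0 < ρ) (hρ₁ : ρ ≤ 1)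
    (hg : ContinuousOn g (Icc 0 1)) (hρg : ∀ u ∈ Icc (0 : ℝ) 1, ρ ≤ g u)
    (hug : ∀ u ∈ Icc (0 : ℝ) 1, u ≤ g u) {q : ℝ} (hq : 0 ≤ q) :
    ∫ u in (0 : ℝ)..1, u ^ b / g u ^ q ≤ ρ ^ (b + 1 - q) / (b + 1) + ∫ u in ρ..1, u ^ (b - q) := by
  have hg₀ : ∀ u ∈ Icc (0 : ℝ) 1, 0 < g u := fun u hu => hρ.trans_le (hρg u hu)
  have hρmem : ρ ∈ Icc (0 : ℝ) 1 := ⟨hρ.le, hρ₁⟩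
  have hint₁ := intervalIntegrable_rpow_div_rpow hb hg hg₀ q (left_mem_Icc.2 zero_le_one) hρmem
  have hint₂ := intervalIntegrable_rpow_div_rpow hb hg hg₀ q hρmem (right_mem_Icc.2 zero_le_one)
  rw [← integral_add_adjacent_intervals hint₁ hint₂]
  gcongr ?_ + ?_
  · calc ∫ u in (0 : ℝ)..ρ, u ^ b / g u ^ q ≤ ∫ u in (0 : ℝ)..ρ, u ^ b / ρ ^ q :=
          integral_mono_on hρ.le hint₁
            ((intervalIntegrable_rpow' hb).div_const _) fun u hu =>
            div_le_div_of_nonneg_left (rpow_nonneg hu.1 b) (rpow_pos_of_pos hρ q)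
              (rpow_le_rpow hρ.le (hρg u ⟨hu.1, hu.2.trans hρ₁⟩) hq)
      _ = ρ ^ (b + 1 - q) / (b + 1) := by
        rw [intervalIntegral.integral_div, integral_rpow (Or.inl hb), zero_rpow (by linarith),
          rpow_sub hρ]
        ring
  · refine integral_mono_on hρ₁ hint₂
      (intervalIntegrable_rpow (Or.inr (notMem_uIcc_of_lt hρ one_pos))) fun u hu => ?_
    have hu₀ : 0 < u := hρ.trans_le hu.1
    rw [rpow_sub hu₀]
    exact div_le_div_of_nonneg_left (rpow_nonneg hu₀.le b) (rpow_pos_of_pos hu₀ q)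
      (rpow_le_rpow hu₀.le (hug u ⟨hu₀.le, hu.2⟩) hq)

lemma integral_rpow_div_rpow_le_of_nonpos (hb : -1 < b) (hg : ContinuousOn g (Icc 0 1))
    (hg₀ : ∀ u ∈ Icc (0 : ℝ) 1, 0 < g u) {M : ℝ} (hgM : ∀ u ∈ Icc (0 : ℝ) 1, g u ≤ M)
    {q : ℝ} (hq : q ≤ 0) :
    ∫ u in (0 : ℝ)..1, u ^ b / g u ^ q ≤ M ^ (-q) / (b + 1) := by
  have h₁ : (1 : ℝ) ∈ Icc (0 : ℝ) 1 := right_mem_Icc.2 zero_le_one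
  have hM : 0 < M := (hg₀ 1 h₁).trans_le (hgM 1 h₁)
  calc ∫ u in (0 : ℝ)..1, u ^ b / g u ^ q ≤ ∫ u in (0 : ℝ)..1, u ^ b / M ^ q :=
        integral_mono_on zero_le_one
          (intervalIntegrable_rpow_div_rpow hb hg hg₀ q (left_mem_Icc.2 zero_le_one) h₁)
          ((intervalIntegrable_rpow' hb).div_const _) fun u hu =>
          div_le_div_of_nonneg_left (rpow_nonneg hu.1 b) (rpow_pos_of_pos hM q)
            (rpow_le_rpow_of_nonpos (hg₀ u hu) (hgM u hu) hq)
    _ = M ^ (-q) / (b + 1) := by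
        rw [intervalIntegral.integral_div, integral_rpow (Or.inl hb), zero_rpow (by linarith),
          one_rpow, rpow_neg hM.le]
        ring

lemma integral_rpow_neg_one_sub {ρ c : ℝ} (hρ : 0 < ρ) (hc : c ≠ 0) :
    ∫ u in ρ..1, u ^ (-1 - c) = (ρ ^ (-c) - 1) / c := by
  rw [integral_rpow (Or.inr ⟨by contrapose! hc; linarith, notMem_uIcc_of_lt hρ one_pos⟩),
    show -1 - c + 1 = -c by ring, one_rpow, div_neg, ← neg_div, neg_sub]

lemma integral_rpow_neg_one {ρ : ℝ} (hρ : 0 < ρ) :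
    ∫ u in ρ..1, u ^ (-1 : ℝ) = log (1 / ρ) := by
  simp only [rpow_neg_one]
  exact integral_inv_of_pos hρ one_pos

lemma integral_one_sub_rpow_div (f : ℝ → ℝ) (b q : ℝ) :
    ∫ t in (0 : ℝ)..1, (1 - t) ^ b / f t ^ q = ∫ u in (0 : ℝ)..1, u ^ b / f (1 - u) ^ q := by
  simpa using integral_comp_sub_left (a := 0) (b := 1) (fun u => u ^ b / f (1 - u) ^ q) 1

end RpowDivRpow

section BrIntegral

open MeasureTheory Set intervalIntegral Real

noncomputable def brIntegral {n : ℕ} (b c : ℝ) (x y : EuclideanSpace ℝ (Fin n)) : ℝ :=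
  ∫ t in (0 : ℝ)..1, (1 - t) ^ b / br (t • x) y ^ (1 + b + c)

variable {n : ℕ} {x y : EuclideanSpace ℝ (Fin n)} {b c : ℝ}

lemma brIntegral_le_of_nonneg (hb : -1 < b) (hx : ‖x‖ < 1) (hy : ‖y‖ < 1)
    (hq : 0 ≤ 1 + b + c) :
    brIntegral b c x y ≤
      (br x y / 2) ^ (-c) / (b + 1) + ∫ u in br x y / 2..1, u ^ (-1 - c) := by
  have hxy : ‖x‖ * ‖y‖ ≤ 1 := mul_le_one₀ hx.le (norm_nonneg y) hy.le
  rw [brIntegral, integral_one_sub_rpow_div]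
  have h := integral_rpow_div_rpow_le_of_nonneg (g := fun u => br ((1 - u) • x) y) hb
    (half_pos (br_pos hx hy)) (by linarith [br_le_two hxy]) (by fun_prop)
    (fun u hu => half_br_le_br_smul hxy (sub_nonneg.2 hu.2) (sub_le_self 1 hu.1))
    (fun u hu => by simpa using one_sub_le_br_smul hxy (sub_nonneg.2 hu.2)) hq
  rwa [show b + 1 - (1 + b + c) = -c by ring, show b - (1 + b + c) = -1 - c by ring] at h

lemma brIntegral_le_of_ne_zero (hb : -1 < b) (hc : c ≠ 0) (hx : ‖x‖ < 1) (hy : ‖y‖ < 1)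
    (hq : 0 ≤ 1 + b + c) :
    brIntegral b c x y ≤ (br x y / 2) ^ (-c) / (b + 1) + ((br x y / 2) ^ (-c) - 1) / c := by
  rw [← integral_rpow_neg_one_sub (half_pos (br_pos hx hy)) hc]
  exact brIntegral_le_of_nonneg hb hx hy hq

lemma brIntegral_le_of_nonpos (hb : -1 < b) (hx : ‖x‖ < 1) (hy : ‖y‖ < 1)
    (hq : 1 + b + c ≤ 0) :
    brIntegral b c x y ≤ 2 ^ (-(1 + b + c)) / (b + 1) := by
  have hxy : ‖x‖ * ‖y‖ ≤ 1 := mul_le_one₀ hx.le (norm_nonneg y) hy.le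
  rw [brIntegral, integral_one_sub_rpow_div]
  exact integral_rpow_div_rpow_le_of_nonpos (g := fun u => br ((1 - u) • x) y) hb (by fun_prop)
    (fun u hu => (half_pos (br_pos hx hy)).trans_le
      (half_br_le_br_smul hxy (sub_nonneg.2 hu.2) (sub_le_self 1 hu.1)))
    (fun u hu => br_smul_le_two hxy (abs_le.2 ⟨by linarith [hu.2], by linarith [hu.1]⟩)) hq

lemma exists_brIntegral_le_div_rpow (hb : -1 < b) (hc : 0 < c) :
    ∃ C > 0, ∀ x y : EuclideanSpace ℝ (Fin n), ‖x‖ < 1 → ‖y‖ < 1 →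
      brIntegral b c x y ≤ C / br x y ^ c := by
  have hb₁ : 0 < b + 1 := by linarith
  refine ⟨2 ^ c * (1 / (b + 1) + 1 / c), by positivity, fun x y hx hy => ?_⟩
  have hr := br_pos hx hy
  have hρ : (br x y / 2) ^ (-c) = 2 ^ c / br x y ^ c := by
    rw [rpow_neg (by positivity), div_rpow hr.le zero_le_two, inv_div]
  calc brIntegral b c x y ≤ (br x y / 2) ^ (-c) / (b + 1) + ((br x y / 2) ^ (-c) - 1) / c :=
        brIntegral_le_of_ne_zero hb hc.ne' hx hy (by linarith)
    _ ≤ (br x y / 2) ^ (-c) / (b + 1) + (br x y / 2) ^ (-c) / c := by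
        gcongr
        linarith
    _ = 2 ^ c * (1 / (b + 1) + 1 / c) / br x y ^ c := by rw [hρ]; ring

lemma exists_brIntegral_le_mul_one_add_log (hb : -1 < b) :
    ∃ C > 0, ∀ x y : EuclideanSpace ℝ (Fin n), ‖x‖ < 1 → ‖y‖ < 1 →
      brIntegral b 0 x y ≤ C * (1 + log (1 / br x y)) := by
  have hb₁ : 0 < b + 1 := by linarith
  have hlog₂ : 0 < 1 - log 2 := by linarith [log_two_lt_d9]
  have hK : 0 < 1 / (b + 1) + log 2 := by positivity
  obtain ⟨D, hD₀, hDK⟩ : ∃ D > 0, D * (1 - log 2) = 1 / (b + 1) + log 2 :=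
    ⟨_, div_pos hK hlog₂, div_mul_cancel₀ _ hlog₂.ne'⟩
  refine ⟨1 + D, by positivity, fun x y hx hy => ?_⟩
  have hr := br_pos hx hy
  have hL : -log 2 ≤ log (1 / br x y) := by
    rw [one_div, log_inv, neg_le_neg_iff]
    exact log_le_log hr (br_le_two (mul_le_one₀ hx.le (norm_nonneg y) hy.le))
  have hI : brIntegral b 0 x y ≤ 1 / (b + 1) + log 2 + log (1 / br x y) := by
    have h := brIntegral_le_of_nonneg (c := 0) hb hx hy (by linarith)
    rw [neg_zero, rpow_zero, sub_zero, integral_rpow_neg_one (half_pos hr), one_div_div,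
      log_div two_ne_zero hr.ne'] at h
    rw [one_div (br x y), log_inv]
    linarith
  nlinarith [mul_le_mul_of_nonneg_left (by linarith : 1 - log 2 ≤ 1 + log (1 / br x y)) hD₀.le]

lemma exists_brIntegral_le (hb : -1 < b) (hc : c < 0) :
    ∃ C > 0, ∀ x y : EuclideanSpace ℝ (Fin n), ‖x‖ < 1 → ‖y‖ < 1 → brIntegral b c x y ≤ C := by
  have hb₁ : 0 < b + 1 := by linarith
  rcases le_total 0 (1 + b + c) with hq | hq
  · have hc' : 0 < 1 / -c := one_div_pos.2 (neg_pos.2 hc)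
    refine ⟨1 / (b + 1) + 1 / -c, by positivity, fun x y hx hy => ?_⟩
    have hr := br_pos hx hy
    have hρ₀ : 0 ≤ (br x y / 2) ^ (-c) := by positivity
    have hρ₁ : (br x y / 2) ^ (-c) ≤ 1 :=
      rpow_le_one (by positivity)
        (by linarith [br_le_two (mul_le_one₀ hx.le (norm_nonneg y) hy.le)]) (by linarith)
    calc brIntegral b c x y ≤ (br x y / 2) ^ (-c) / (b + 1) + ((br x y / 2) ^ (-c) - 1) / c :=
          brIntegral_le_of_ne_zero hb hc.ne hx hy hq
      _ = (br x y / 2) ^ (-c) / (b + 1) + (1 - (br x y / 2) ^ (-c)) / -c := by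
          rw [div_neg, ← neg_div, neg_sub]
      _ ≤ 1 / (b + 1) + 1 / -c := by gcongr <;> linarith
  · exact ⟨2 ^ (-(1 + b + c)) / (b + 1), by positivity,
      fun x y hx hy => brIntegral_le_of_nonpos hb hx hy hq⟩

end BrIntegral

theorem stmt_4_general {n : ℕ} (b c : ℝ) (hb : -1 < b) :
    ∃ C > 0, ∀ x y : EuclideanSpace ℝ (Fin n), ‖x‖ < 1 → ‖y‖ < 1 →
      ((0 < c → (∫ t in (0:ℝ)..1, (1 - t) ^ b / br (t • x) y ^ (1 + b + c))
          ≤ C / br x y ^ c) ∧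
       (c = 0 → (∫ t in (0:ℝ)..1, (1 - t) ^ b / br (t • x) y ^ (1 + b + c))
          ≤ C * (1 + Real.log (1 / br x y))) ∧
       (c < 0 → (∫ t in (0:ℝ)..1, (1 - t) ^ b / br (t • x) y ^ (1 + b + c))
          ≤ C)) := by
  rcases lt_trichotomy c 0 with hc | rfl | hc
  · obtain ⟨C, hC, hI⟩ := exists_brIntegral_le (n := n) hb hc
    exact ⟨C, hC, fun x y hx hy =>
      ⟨fun h => absurd h hc.not_gt, fun h => absurd h hc.ne, fun _ => hI x y hx hy⟩⟩
  · obtain ⟨C, hC, hI⟩ := exists_brIntegral_le_mul_one_add_log (n := n) hb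
    exact ⟨C, hC, fun x y hx hy =>
      ⟨fun h => absurd h (lt_irrefl 0), fun _ => hI x y hx hy, fun h => absurd h (lt_irrefl 0)⟩⟩
  · obtain ⟨C, hC, hI⟩ := exists_brIntegral_le_div_rpow (n := n) hb hc
    exact ⟨C, hC, fun x y hx hy =>
      ⟨fun _ => hI x y hx hy, fun h => absurd h hc.ne', fun h => absurd h hc.not_gt⟩⟩

theorem stmt_4 {n : ℕ} (hn : 2 ≤ n) (b c : ℝ) (hb : -1 < b) :
    ∃ C > 0, ∀ x y : EuclideanSpace ℝ (Fin n), ‖x‖ < 1 → ‖y‖ < 1 →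
      ((0 < c → (∫ t in (0:ℝ)..1, (1 - t) ^ b / br (t • x) y ^ (1 + b + c))
          ≤ C / br x y ^ c) ∧
       (c = 0 → (∫ t in (0:ℝ)..1, (1 - t) ^ b / br (t • x) y ^ (1 + b + c))
          ≤ C * (1 + Real.log (1 / br x y))) ∧
       (c < 0 → (∫ t in (0:ℝ)..1, (1 - t) ^ b / br (t • x) y ^ (1 + b + c))
          ≤ C)) :=
  stmt_4_general b c hb
end
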